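/- For every even n ≥ 4 there exists a set of n points in ℝ³ of diameter 1, all lying on a common 2-sphere, with exactly 2n − 2 pairs at distance 1. -/

import Mathlib

/-!
Take a regular `m`-gon, `m = n - 1` odd, whose longest diagonals have length `1`, and put an apex
on its axis at distance `1` from every vertex. The chord between vertices `j` and `k` is a
decreasing function of `cos (2π r / m)`, `r = (j - k) mod m`, and `2π r / m = π - π (m - 2r) / m`
with `1 ≤ |m - 2r|` because `m` is odd; so every chord is at most `1`, with equality exactly for
`r = (m ± 1) / 2`. So each vertex has two polygon neighbours at distance `1`, and the `2m = 2n - 2`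
unit pairs are the `m` longest diagonals and the `m` edges to the apex. The vertices lie on a
circle and the apex on its axis, so all `n` points lie on a sphere centred on that axis.
-/

open Classical in
/-- Number of ordered pairs of distinct points of `S` at distance exactly `1`
(twice the number of unordered such pairs). -/
noncomputable def unitPairs {d : ℕ} (S : Finset (EuclideanSpace ℝ (Fin d))) : ℕ :=
  (S.offDiag.filter fun p => dist p.1 p.2 = 1).card

open Real Finset Function

theorem unitPairs_eq_sum {d : ℕ} (S : Finset (EuclideanSpace ℝ (Fin d))) :
    unitPairs S = ∑ x ∈ S, #{y ∈ S | dist x y = 1} := by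
  have hdiag : S.offDiag.filter (fun p => dist p.1 p.2 = 1) =
      (S ×ˢ S).filter (fun p => dist p.1 p.2 = 1) := by
    ext ⟨x, y⟩
    simp only [mem_filter, mem_offDiag, mem_product]
    constructor
    · tauto
    · rintro ⟨⟨hx, hy⟩, h⟩
      exact ⟨⟨hx, hy, by rintro rfl; simp at h⟩, h⟩
  rw [unitPairs, hdiag, card_filter, sum_product]
  simp only [card_filter]

theorem unitPairs_image {d : ℕ} {ι : Type*} [Fintype ι] {q : ι → EuclideanSpace ℝ (Fin d)}
    (hq : Injective q) : unitPairs (univ.image q) = ∑ i, #{j | dist (q i) (q j) = 1} := by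
  rw [unitPairs_eq_sum, sum_image hq.injOn]
  refine sum_congr rfl fun i _ => ?_
  rw [filter_image, card_image_of_injective _ hq]

theorem cos_pi_mul_div_le_cos_pi_div {m : ℕ} {d : ℤ} (h1 : 1 ≤ |d|) (h2 : |d| ≤ m) :
    cos (π * d / m) ≤ cos (π / m) ∧ (cos (π * d / m) = cos (π / m) ↔ |d| = 1) := by
  have hm : (0 : ℝ) < m := by exact_mod_cast h1.trans h2
  have h1' : (1 : ℝ) ≤ |(d : ℝ)| := by exact_mod_cast h1
  have h2' : |(d : ℝ)| ≤ m := by exact_mod_cast h2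
  have habs : cos (π * d / m) = cos (π * |(d : ℝ)| / m) := by
    rw [← cos_abs, abs_div, abs_mul, abs_of_pos pi_pos, abs_of_pos hm]
  have hlo : π / m ≤ π * |(d : ℝ)| / m := by
    gcongr; nlinarith [pi_pos]
  have hhi : π * |(d : ℝ)| / m ≤ π := by
    rw [div_le_iff₀ hm]; gcongr
  rw [habs]
  refine ⟨cos_le_cos_of_nonneg_of_le_pi (by positivity) hhi hlo, ⟨fun h => ?_, fun h => ?_⟩⟩
  · have := injOn_cos ⟨by positivity, hhi⟩ ⟨by positivity, hlo.trans hhi⟩ h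
    field_simp at this
    exact_mod_cast this
  · rw [show |(d : ℝ)| = 1 by exact_mod_cast h, mul_one]

theorem cos_two_pi_mul_div_eq_neg_cos {m : ℕ} (hm : m ≠ 0) (r : ℤ) :
    cos (2 * π * r / m) = -cos (π * ((m : ℤ) - 2 * r : ℤ) / m) := by
  rw [← cos_pi_sub]
  congr 1
  push_cast
  field_simp
  ring

theorem cos_two_pi_mul_div_congr {m : ℕ} {a b : ℤ} (h : a ≡ b [ZMOD m]) :
    cos (2 * π * a / m) = cos (2 * π * b / m) := by
  rcases eq_or_ne m 0 with rfl | hm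
  · simp
  obtain ⟨t, ht⟩ := h.dvd
  have : (b : ℝ) = a + m * t := by rw [← sub_eq_iff_eq_add']; exact_mod_cast ht
  rw [this, show 2 * π * (a + m * t) / m = 2 * π * a / m + t * (2 * π) by field_simp,
    cos_add_int_mul_two_pi]

theorem cos_two_pi_mul_div_eq_one_iff {m r : ℕ} (hr : r < m) :
    cos (2 * π * r / m) = 1 ↔ r = 0 := by
  refine ⟨fun h => ?_, fun h => by simp [h]⟩
  obtain ⟨n, hn⟩ := (cos_eq_one_iff _).1 h
  have hm : (m : ℝ) ≠ 0 := Nat.cast_ne_zero.2 (by omega)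
  have hreal : (r : ℝ) = n * m := by
    field_simp at hn
    nlinarith [pi_pos]
  have hint : (r : ℤ) = n * m := by exact_mod_cast hreal
  rcases le_or_gt n 0 with hn0 | hn0 <;> nlinarith

theorem neg_cos_pi_div_le_cos_two_pi_mul_div {m r : ℕ} (hodd : Odd m) (hr : r < m) :
    -cos (π / m) ≤ cos (2 * π * r / m) ∧
      (cos (2 * π * r / m) = -cos (π / m) ↔ 2 * r + 1 = m ∨ 2 * r = m + 1) := by
  have hm : m ≠ 0 := by omega
  have h1 : 1 ≤ |(m : ℤ) - 2 * r| := by obtain ⟨t, rfl⟩ := hodd; rw [le_abs]; omega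
  have h2 : |(m : ℤ) - 2 * r| ≤ m := by rw [abs_le]; omega
  obtain ⟨hle, heq⟩ := cos_pi_mul_div_le_cos_pi_div h1 h2
  have := cos_two_pi_mul_div_eq_neg_cos hm r
  push_cast at this hle heq
  rw [this, neg_le_neg_iff, neg_inj, heq, abs_eq (by norm_num)]
  exact ⟨hle, by omega⟩

theorem ZMod.eq_natCast_iff_val_eq {m a : ℕ} [NeZero m] (x : ZMod m) (ha : a < m) :
    x = a ↔ x.val = a := by
  rw [← (ZMod.val_injective m).eq_iff, ZMod.val_cast_of_lt ha]

theorem dist_vec3_sq (a b c a' b' c' : ℝ) :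
    dist !₂[a, b, c] !₂[a', b', c'] ^ 2 = (a - a') ^ 2 + (b - b') ^ 2 + (c - c') ^ 2 := by
  rw [EuclideanSpace.dist_eq, sq_sqrt (by positivity)]
  simp [Fin.sum_univ_three, Real.dist_eq, sq_abs]

namespace PolygonPyramid

variable {m : ℕ}

-- The longest diagonals of a regular `m`-gon, `m` odd, have length `2 R cos (π / (2 m))`.
noncomputable def circumradius (m : ℕ) : ℝ := 1 / (2 * cos (π / (2 * m)))

noncomputable def apexHeight (m : ℕ) : ℝ := √(1 - circumradius m ^ 2)

noncomputable def vertex (m : ℕ) (k : ZMod m) : EuclideanSpace ℝ (Fin 3) :=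
  !₂[circumradius m * cos (2 * π * k.val / m), circumradius m * sin (2 * π * k.val / m), 0]

noncomputable def apex (m : ℕ) : EuclideanSpace ℝ (Fin 3) := !₂[0, 0, apexHeight m]

theorem half_lt_cos_pi_div_two_mul (hm : 2 ≤ m) : 1 / 2 < cos (π / (2 * m)) := by
  have hm' : (2 : ℝ) ≤ m := by exact_mod_cast hm
  rw [← cos_pi_div_three]
  apply cos_lt_cos_of_nonneg_of_le_pi (by positivity) (by linarith [pi_pos])
  gcongr
  linarith

theorem two_mul_circumradius_sq (hm : 2 ≤ m) :
    2 * circumradius m ^ 2 * (1 + cos (π / m)) = 1 := by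
  have hc := half_lt_cos_pi_div_two_mul hm
  have hm0 : (m : ℝ) ≠ 0 := by positivity
  rw [show π / m = 2 * (π / (2 * m)) by field_simp, cos_two_mul, circumradius]
  field_simp
  ring

theorem circumradius_pos (hm : 2 ≤ m) : 0 < circumradius m := by
  have := half_lt_cos_pi_div_two_mul hm
  rw [circumradius]
  positivity

theorem circumradius_lt_one (hm : 2 ≤ m) : circumradius m < 1 := by
  have := half_lt_cos_pi_div_two_mul hm
  rw [circumradius, div_lt_one (by linarith)]
  linarith

theorem apexHeight_pos (hm : 2 ≤ m) : 0 < apexHeight m := by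
  have := circumradius_pos hm
  have := circumradius_lt_one hm
  exact sqrt_pos.2 (by nlinarith)

theorem apexHeight_sq (hm : 2 ≤ m) : apexHeight m ^ 2 = 1 - circumradius m ^ 2 := by
  have := circumradius_pos hm
  have := circumradius_lt_one hm
  exact sq_sqrt (by nlinarith)

theorem dist_vertex_sq [NeZero m] (j k : ZMod m) :
    dist (vertex m j) (vertex m k) ^ 2 =
      2 * circumradius m ^ 2 * (1 - cos (2 * π * (j - k).val / m)) := by
  have hjk : ((j.val - k.val : ℤ) : ℝ) = j.val - k.val := by push_cast; ring
  have hmod : (j.val - k.val : ℤ) ≡ (j - k).val [ZMOD m] := by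
    rw [← ZMod.intCast_eq_intCast_iff]
    push_cast
    simp only [ZMod.natCast_val, ZMod.cast_id', id]
  have hcos := cos_two_pi_mul_div_congr hmod
  rw [hjk, Int.cast_natCast, mul_sub, sub_div, cos_sub] at hcos
  rw [vertex, vertex, dist_vec3_sq, ← hcos]
  linear_combination (circumradius m) ^ 2 * (sin_sq_add_cos_sq (2 * π * j.val / m)
    + sin_sq_add_cos_sq (2 * π * k.val / m))

theorem dist_apex_vertex (hm : 2 ≤ m) (k : ZMod m) : dist (apex m) (vertex m k) = 1 := by
  have h : dist (apex m) (vertex m k) ^ 2 = 1 := by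
    rw [apex, vertex, dist_vec3_sq]
    linear_combination (circumradius m) ^ 2 * sin_sq_add_cos_sq (2 * π * k.val / m)
      + apexHeight_sq hm
  exact (pow_eq_one_iff_of_nonneg dist_nonneg two_ne_zero).1 h

theorem dist_vertex_le_one (hm : 2 ≤ m) (hodd : Odd m) (j k : ZMod m) :
    dist (vertex m j) (vertex m k) ≤ 1 := by
  have : NeZero m := ⟨by omega⟩
  have hcos := (neg_cos_pi_div_le_cos_two_pi_mul_div hodd (ZMod.val_lt (j - k))).1
  have hsq : dist (vertex m j) (vertex m k) ^ 2 ≤ 1 := by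
    calc _ ≤ 2 * circumradius m ^ 2 * (1 + cos (π / m)) := by
          rw [dist_vertex_sq]; gcongr; linarith
      _ = 1 := two_mul_circumradius_sq hm
  exact (pow_le_one_iff_of_nonneg dist_nonneg two_ne_zero).1 hsq

theorem dist_vertex_eq_one_iff (hm : 2 ≤ m) (hodd : Odd m) (j k : ZMod m) :
    dist (vertex m j) (vertex m k) = 1 ↔
      j - k = ((m - 1) / 2 : ℕ) ∨ j - k = ((m + 1) / 2 : ℕ) := by
  have : NeZero m := ⟨by omega⟩
  have hR := circumradius_pos hm
  have hsq : dist (vertex m j) (vertex m k) ^ 2 = 1 ↔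
      2 * circumradius m ^ 2 * (1 - cos (2 * π * (j - k).val / m)) =
        2 * circumradius m ^ 2 * (1 + cos (π / m)) := by
    rw [dist_vertex_sq, two_mul_circumradius_sq hm]
  rw [← pow_eq_one_iff_of_nonneg dist_nonneg two_ne_zero, hsq, mul_right_inj' (by positivity),
    sub_eq_add_neg, add_right_inj, neg_eq_iff_eq_neg,
    (neg_cos_pi_div_le_cos_two_pi_mul_div hodd (ZMod.val_lt (j - k))).2,
    ZMod.eq_natCast_iff_val_eq _ (by omega), ZMod.eq_natCast_iff_val_eq _ (by omega)]
  obtain ⟨t, rfl⟩ := hodd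
  omega

theorem vertex_injective (hm : 2 ≤ m) : Injective (vertex m) := by
  have : NeZero m := ⟨by omega⟩
  intro j k hjk
  have hR := circumradius_pos hm
  have hsq := dist_vertex_sq j k
  rw [hjk, dist_self, eq_comm, zero_pow two_ne_zero, mul_eq_zero, sub_eq_zero,
    or_iff_right (by positivity), eq_comm, cos_two_pi_mul_div_eq_one_iff (ZMod.val_lt _),
    ZMod.val_eq_zero, sub_eq_zero] at hsq
  exact hsq

theorem card_filter_dist_vertex_eq_one [NeZero m] (hm : 2 ≤ m) (hodd : Odd m) (j : ZMod m) :
    #{k | dist (vertex m j) (vertex m k) = 1} = 2 := by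
  have hne : j - ((m - 1) / 2 : ℕ) ≠ j - ((m + 1) / 2 : ℕ) := by
    rw [Ne, sub_right_inj, ZMod.eq_natCast_iff_val_eq _ (by omega), ZMod.val_cast_of_lt (by omega)]
    obtain ⟨t, rfl⟩ := hodd
    omega
  rw [← card_pair hne]
  congr 1
  ext k
  rw [mem_filter_univ, dist_vertex_eq_one_iff hm hodd, mem_insert, mem_singleton,
    eq_sub_iff_add_eq, eq_sub_iff_add_eq, sub_eq_iff_eq_add', sub_eq_iff_eq_add',
    eq_comm (a := j), eq_comm (a := j)]

noncomputable def point (m : ℕ) : Option (ZMod m) → EuclideanSpace ℝ (Fin 3)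
  | none => apex m
  | some k => vertex m k

-- The height `z` of the centre solves `(h - z) ^ 2 = R ^ 2 + z ^ 2`.
noncomputable def center (m : ℕ) : EuclideanSpace ℝ (Fin 3) :=
  !₂[0, 0, (apexHeight m ^ 2 - circumradius m ^ 2) / (2 * apexHeight m)]

theorem point_injective (hm : 2 ≤ m) : Injective (point m) := by
  have hapex (k : ZMod m) : apex m ≠ vertex m k := fun h => by
    simpa [h] using dist_apex_vertex hm k
  rintro (_ | j) (_ | k) h
  · rfl
  · exact absurd h (hapex k)
  · exact absurd h.symm (hapex j)
  · exact congrArg some (vertex_injective hm h)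

theorem dist_point_le_one (hm : 2 ≤ m) (hodd : Odd m) (i i' : Option (ZMod m)) :
    dist (point m i) (point m i') ≤ 1 := by
  rcases i with _ | j <;> rcases i' with _ | k
  · simp [point]
  · exact (dist_apex_vertex hm k).le
  · exact (dist_comm (apex m) _ ▸ dist_apex_vertex hm j).le
  · exact dist_vertex_le_one hm hodd j k

theorem dist_point_center (hm : 2 ≤ m) (i : Option (ZMod m)) :
    dist (point m i) (center m) = dist (apex m) (center m) := by
  rcases i with _ | k
  · rfl
  have hh := apexHeight_pos hm
  rw [point, ← sq_eq_sq₀ dist_nonneg dist_nonneg, vertex, apex, center, dist_vec3_sq, dist_vec3_sq]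
  field_simp
  linear_combination (4 * apexHeight m ^ 2 * circumradius m ^ 2) *
    sin_sq_add_cos_sq (2 * π * k.val / m)

theorem card_filter_option {α : Type*} [Fintype α] (p : Option α → Prop) [DecidablePred p] :
    #{i | p i} = (if p none then 1 else 0) + #{a | p (some a)} := by
  simp only [card_filter, Fintype.sum_option]

theorem card_filter_dist_apex [NeZero m] (hm : 2 ≤ m) :
    #{i | dist (point m none) (point m i) = 1} = m := by
  rw [card_filter_option]
  simp [point, dist_apex_vertex hm]

theorem card_filter_dist_vertex [NeZero m] (hm : 2 ≤ m) (hodd : Odd m) (j : ZMod m) :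
    #{i | dist (point m (some j)) (point m i) = 1} = 3 := by
  have hapex : dist (point m (some j)) (point m none) = 1 :=
    (dist_comm _ _).trans (dist_apex_vertex hm j)
  rw [card_filter_option, if_pos hapex]
  exact congrArg (1 + ·) (card_filter_dist_vertex_eq_one hm hodd j)

end PolygonPyramid

open PolygonPyramid

/-- For every even `n ≥ 4` there exist `n` points of diameter 1 on a 2-sphere in ℝ³
with exactly `2n − 2` diameter pairs. -/
theorem stmt_11 (n : ℕ) (hn : 4 ≤ n) (heven : Even n) :
    ∃ (S : Finset (EuclideanSpace ℝ (Fin 3))) (c : EuclideanSpace ℝ (Fin 3)) (r : ℝ),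
      S.card = n ∧ (∀ x ∈ S, dist x c = r) ∧
      (∀ x ∈ S, ∀ y ∈ S, dist x y ≤ 1) ∧
      unitPairs S = 2 * (2 * n - 2) := by
  obtain ⟨m, rfl⟩ : ∃ m, n = m + 1 := ⟨n - 1, by omega⟩
  have hm : 2 ≤ m := by omega
  have hodd : Odd m := Nat.not_even_iff_odd.1 (Nat.even_add_one.1 heven)
  have : NeZero m := ⟨by omega⟩
  refine ⟨univ.image (point m), center m, dist (apex m) (center m), ?_, ?_, ?_, ?_⟩
  · rw [card_image_of_injective _ (point_injective hm), card_univ, Fintype.card_option, ZMod.card]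
  · simpa using dist_point_center hm
  · simpa using dist_point_le_one hm hodd
  · rw [unitPairs_image (point_injective hm), Fintype.sum_option, card_filter_dist_apex hm]
    simp only [card_filter_dist_vertex hm hodd, sum_const, card_univ, ZMod.card, smul_eq_mul]
    omega
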